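/- Let (G,<) be an ordered group possessing a convex jump (N,H) which is not central, i.e., [H,G] ⊄ N. Then G contains a noncommutative free monoid; more precisely, there exist elements a, b ∈ G with 1 < a and 1 < b such that a and b generate a free monoid of rank 2 in G. (In the terminology of the paper: every ordered group of type 2 or type 3 contains a noncommutative free monoid generated by two positive elements.) -/

import Mathlib

/-- Elements `a, b` of a monoid `G` generate a free monoid of rank 2 if the monoid
homomorphism from the free monoid on two generators to `G` sending the generators to
`a` and `b` is injective. -/
def GeneratesFreeMonoid2 {G : Type*} [Monoid G] (a b : G) : Prop :=
  Function.Injective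
    (FreeMonoid.lift (fun i : Fin 2 => if i = 0 then a else b) : FreeMonoid (Fin 2) →* G)

/-- A subgroup `C` of an ordered group is convex if whenever `x, z ∈ C`, `y ∈ G` and
`x ≤ y ≤ z`, then `y ∈ C`. -/
def Subgroup.IsConvex {G : Type*} [Group G] [Preorder G] (C : Subgroup G) : Prop :=
  ∀ x ∈ C, ∀ z ∈ C, ∀ y : G, x ≤ y → y ≤ z → y ∈ C

/-- A pair `(N, H)` of convex subgroups is a convex jump if `N ⊊ H` and no convex subgroup
lies strictly between `N` and `H`. -/
def Subgroup.IsConvexJump {G : Type*} [Group G] [Preorder G] (N H : Subgroup G) : Prop :=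
  N.IsConvex ∧ H.IsConvex ∧ N < H ∧ ∀ K : Subgroup G, K.IsConvex → ¬(N < K ∧ K < H)

/-!
Pick `1 < h` in `H \ N`. It suffices to find `g` with `h < |g|ₘ` and `g h² g⁻¹ ≤ h`: then, for
`a = |g|ₘ`, the words of length `n` in `a` and `a h` (or in `a` and `h a`) lie in `[aⁿ, h aⁿ)`
(or `[aⁿ, aⁿ h)`). As `h ≤ a`, this interval determines `n`, and the intervals
`a [aⁿ, h aⁿ)` and `a h [aⁿ, h aⁿ)` are disjoint, so a word is determined by its value.

Conjugation permutes the convex subgroups, which form a chain. If the noncentral `g` does not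
normalize `H`, then `g H g⁻¹ < H` or `g⁻¹ H g < H`; that conjugate lies inside `N`, so
`g h² g⁻¹` (or `g⁻¹ h² g`) lies in `N`, below `h`. Otherwise `g` normalizes `H`, hence `N`,
and acts nontrivially on `H / N`. This quotient is archimedean and, by Hölder's argument,
abelian, so conjugation by `g` or `g⁻¹` is expanding: a power `b` of it satisfies
`h² < b h b⁻¹` modulo `N`. Then `b⁻¹` works: `b ∉ H` because `H` acts trivially on `H / N`.
-/

open scoped Pointwise commutatorElement

section Group

variable {G : Type*} [Group G]

theorem FreeMonoid.lift_inv_apply {α : Type*} (f : α → G) (w : FreeMonoid α) :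
    FreeMonoid.lift (fun i => (f i)⁻¹) w = (FreeMonoid.lift f w.reverse)⁻¹ := by
  induction w using FreeMonoid.inductionOn' with
  | one => simp [show (1 : FreeMonoid α).reverse = 1 from rfl]
  | of_mul x w ih => simp [FreeMonoid.reverse_mul, ih]

theorem GeneratesFreeMonoid2.inv {a b : G} (h : GeneratesFreeMonoid2 a b) :
    GeneratesFreeMonoid2 a⁻¹ b⁻¹ := by
  intro w₁ w₂ heq
  have hf : (fun i : Fin 2 => if i = 0 then a⁻¹ else b⁻¹) =
      fun i => (if i = 0 then a else b)⁻¹ := by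
    ext i; split_ifs <;> rfl
  simp only [hf, FreeMonoid.lift_inv_apply, inv_inj] at heq
  simpa using congrArg FreeMonoid.reverse (h heq)

namespace Subgroup

theorem pointwise_smul_lt_pointwise_smul_iff {α : Type*} [Group α] [MulDistribMulAction α G]
    {a : α} {S T : Subgroup G} : a • S < a • T ↔ S < T := by
  simp only [lt_iff_le_not_ge, pointwise_smul_le_pointwise_smul_iff]

theorem commutatorElement_mem_of_zpow_inv_mul_mem {N : Subgroup G} {β x y : G} {p q : ℤ}
    (hβ : β ∈ normalizer (N : Set G)) (hx : (β ^ p)⁻¹ * x ∈ N) (hy : (β ^ q)⁻¹ * y ∈ N) :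
    ⁅x, y⁆ ∈ N := by
  have hconj : ∀ r : ℤ, ∀ n ∈ N, β ^ r * n * (β ^ r)⁻¹ ∈ N := fun r n hn =>
    (mem_normalizer_iff.1 (zpow_mem hβ r) n).1 hn
  obtain ⟨n₁, hn₁, rfl⟩ : ∃ n ∈ N, x = β ^ p * n := ⟨_, hx, by group⟩
  obtain ⟨n₂, hn₂, rfl⟩ : ∃ n ∈ N, y = β ^ q * n := ⟨_, hy, by group⟩
  have e : ⁅β ^ p * n₁, β ^ q * n₂⁆ = (β ^ p * n₁ * (β ^ p)⁻¹) *
      (β ^ (p + q) * (n₂ * n₁⁻¹) * (β ^ (p + q))⁻¹) * (β ^ q * n₂⁻¹ * (β ^ q)⁻¹) := by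
    rw [commutatorElement_def]; group
  rw [e]
  exact mul_mem (mul_mem (hconj p _ hn₁) (hconj _ _ (mul_mem hn₂ (inv_mem hn₁))))
    (hconj q _ (inv_mem hn₂))

end Subgroup

end Group

theorem Subgroup.IsConvex.mem_of_le {G : Type*} [Group G] [Preorder G] {C : Subgroup G}
    (hC : C.IsConvex) {x y : G} (hy : y ∈ C) (hx : 1 ≤ x) (hxy : x ≤ y) : x ∈ C :=
  hC 1 C.one_mem y hy x hx hxy

section LinearOrder

variable {G : Type*} [Group G] [LinearOrder G] {C : Subgroup G}

theorem Subgroup.mabs_mem_iff {x : G} : |x|ₘ ∈ C ↔ x ∈ C := by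
  rcases mabs_choice x with h | h <;> simp [h]

theorem Subgroup.IsConvex.lt_of_notMem (hC : C.IsConvex) {x c : G} (hx : 1 ≤ x) (hxC : x ∉ C)
    (hc : c ∈ C) : c < x :=
  lt_of_not_ge fun hxc => hxC (hC.mem_of_le hc hx hxc)

end LinearOrder

section OrderedGroup

variable {G : Type*} [Group G] [LinearOrder G] [MulLeftStrictMono G] [MulRightStrictMono G]

attribute [local instance] mulLeftMono_of_mulLeftStrictMono mulRightMono_of_mulRightStrictMono

theorem List.prod_lt_mul_pow_length {a h : G} (h1 : 1 < h) (hconj : a * h ^ 2 * a⁻¹ ≤ h)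
    {l : List G} (hl : ∀ x ∈ l, x ≤ a * h) : l.prod < h * a ^ l.length := by
  induction l with
  | nil => simpa using h1
  | cons x t ih =>
    rw [List.forall_mem_cons] at hl
    calc (x :: t).prod = x * t.prod := List.prod_cons
      _ ≤ a * h * t.prod := mul_le_mul_left hl.1 _
      _ < a * h * (h * a ^ t.length) := mul_lt_mul_right (ih hl.2) _
      _ = a * h ^ 2 * a⁻¹ * a ^ (t.length + 1) := by rw [pow_succ' a, pow_two]; group
      _ ≤ h * a ^ (x :: t).length := mul_le_mul_left hconj _

theorem le_of_pow_le_of_lt_mul_pow {a h x : G} (h1 : 1 ≤ h) (hha : h ≤ a) {m n : ℕ}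
    (hm : a ^ m ≤ x) (hn : x < h * a ^ n) : m ≤ n := by
  by_contra! hnm
  have hpow : a ^ (m - n) * a ^ n < h * a ^ n := by
    rw [← pow_add, Nat.sub_add_cancel hnm.le]
    exact hm.trans_lt hn
  exact not_lt_of_ge (hha.trans (le_self_pow (h1.trans hha) (Nat.sub_ne_zero_of_lt hnm)))
    ((mul_lt_mul_iff_right _).1 hpow)

theorem GeneratesFreeMonoid2.of_conj_sq_le {a h : G} (h1 : 1 < h) (hha : h ≤ a)
    (hconj : a * h ^ 2 * a⁻¹ ≤ h) : GeneratesFreeMonoid2 a (a * h) := by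
  set f : Fin 2 → G := fun i => if i = 0 then a else a * h
  set P : List (Fin 2) → G := fun l => (l.map f).prod
  have hf : ∀ i, a ≤ f i ∧ f i ≤ a * h := fun i => by
    by_cases hi : i = 0 <;> simp [f, hi, h1.le]
  have hbound : ∀ l, a ^ l.length ≤ P l ∧ P l < h * a ^ l.length := fun l => by
    simpa [P] using And.intro
      ((l.map f).pow_card_le_prod a (List.forall_mem_map.2 fun i _ => (hf i).1))
      (List.prod_lt_mul_pow_length h1 hconj (List.forall_mem_map.2 fun i _ => (hf i).2))
  have hlen : ∀ {l₁ l₂}, P l₁ = P l₂ → l₁.length = l₂.length := fun he =>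
    (le_of_pow_le_of_lt_mul_pow h1.le hha (hbound _).1 (he ▸ (hbound _).2)).antisymm
      (le_of_pow_le_of_lt_mul_pow h1.le hha (hbound _).1 (he.symm ▸ (hbound _).2))
  have hcross : ∀ t s : List (Fin 2), t.length = s.length → P t ≠ h * P s := by
    intro t s hts he
    have := mul_le_mul_right (hbound s).1 h
    rw [← he, ← hts] at this
    exact not_lt_of_ge this (hbound t).2
  suffices hinj : Function.Injective P by
    intro w₁ w₂ he
    exact FreeMonoid.toList.injective (hinj (by simpa [P, FreeMonoid.lift_apply] using he))
  intro l₁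
  induction l₁ with
  | nil => exact fun l₂ he => (List.length_eq_zero_iff.1 (hlen he).symm).symm
  | cons x t ih =>
    intro l₂ he
    obtain _ | ⟨y, s⟩ := l₂
    · exact absurd (hlen he) (by simp)
    have hts : t.length = s.length := by simpa using hlen he
    simp only [P, List.map_cons, List.prod_cons] at he
    fin_cases x <;> fin_cases y <;> simp only [f] at he <;> simp at he
    · rw [ih he]
    · exact absurd (mul_left_cancel (he.trans (mul_assoc _ _ _))) (hcross t s hts)
    · exact absurd (mul_left_cancel (he.symm.trans (mul_assoc _ _ _))) (hcross s t hts.symm)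
    · rw [ih he]

theorem GeneratesFreeMonoid2.of_inv_conj_sq_le {a h : G} (h1 : 1 < h) (hha : h ≤ a)
    (hconj : a⁻¹ * h ^ 2 * a ≤ h) : GeneratesFreeMonoid2 a (h * a) := by
  -- `of_conj_sq_le` in the order dual, applied to `a⁻¹` and `h⁻¹`, then inverted
  have hconj' : h⁻¹ ≤ a⁻¹ * h⁻¹ ^ 2 * a⁻¹⁻¹ := by
    simpa [← mul_assoc] using inv_le_inv_iff.2 hconj
  have hdual : GeneratesFreeMonoid2 a⁻¹ (a⁻¹ * h⁻¹) :=
    GeneratesFreeMonoid2.of_conj_sq_le (G := Gᵒᵈ) (a := OrderDual.toDual a⁻¹)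
      (h := OrderDual.toDual h⁻¹) (inv_lt_one'.2 h1) (inv_le_inv_iff.2 hha) hconj'
  simpa using hdual.inv

theorem exists_generatesFreeMonoid2_of_conj_sq_le {g h : G} (h1 : 1 < h) (hg : h < |g|ₘ)
    (hconj : g * h ^ 2 * g⁻¹ ≤ h) : ∃ a b : G, 1 < a ∧ 1 < b ∧ GeneratesFreeMonoid2 a b := by
  rcases lt_trichotomy g 1 with hg1 | rfl | hg1
  · rw [mabs_of_lt_one hg1] at hg
    refine ⟨g⁻¹, h * g⁻¹, one_lt_inv'.2 hg1, one_lt_mul' h1 (one_lt_inv'.2 hg1), ?_⟩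
    exact GeneratesFreeMonoid2.of_inv_conj_sq_le h1 hg.le (by simpa using hconj)
  · exact absurd h1 (not_lt_of_gt (by simpa using hg))
  · rw [mabs_of_one_lt hg1] at hg
    exact ⟨g, g * h, hg1, one_lt_mul' hg1 h1,
      GeneratesFreeMonoid2.of_conj_sq_le h1 hg.le hconj⟩

theorem sq_le_or_inv_mul_sq_le (β c : G) : β ^ 2 ≤ c ∨ (β⁻¹ * c) ^ 2 ≤ c := by
  rcases le_or_gt (β ^ 2) c with hle | hlt
  · exact Or.inl hle
  · have hβ : β⁻¹ * c < β := by rwa [inv_mul_lt_iff_lt_mul, ← pow_two]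
    right
    calc (β⁻¹ * c) ^ 2 = β⁻¹ * c * (β⁻¹ * c) := pow_two _
      _ ≤ β * (β⁻¹ * c) := mul_le_mul_left hβ.le _
      _ = c := by group

namespace Subgroup

theorem exists_one_lt_mem_notMem_of_lt {C D : Subgroup G} (h : C < D) :
    ∃ x ∈ D, x ∉ C ∧ 1 < x := by
  obtain ⟨x, hxD, hxC⟩ := SetLike.exists_of_lt h
  refine ⟨|x|ₘ, mabs_mem_iff.2 hxD, mabs_mem_iff.not.2 hxC, (one_le_mabs x).lt_of_ne ?_⟩
  rintro h1
  exact hxC (mabs_mem_iff.1 (h1 ▸ C.one_mem))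

def boundedByPowers (β : G) : Subgroup G where
  carrier := {z | ∃ n : ℕ, z ≤ β ^ n ∧ z⁻¹ ≤ β ^ n}
  one_mem' := ⟨0, by simp⟩
  mul_mem' := by
    rintro z w ⟨n, hz, hz'⟩ ⟨m, hw, hw'⟩
    refine ⟨n + m, ?_, ?_⟩
    · rw [pow_add]; exact mul_le_mul' hz hw
    · rw [add_comm, pow_add, mul_inv_rev]; exact mul_le_mul' hw' hz'
  inv_mem' := by
    rintro z ⟨n, hz, hz'⟩
    exact ⟨n, hz', by simpa using hz⟩

theorem exists_zpow_le_lt_of_mem_boundedByPowers {β z : G} (hβ : 1 < β)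
    (hz : z ∈ boundedByPowers β) : ∃ p : ℤ, β ^ p ≤ z ∧ z < β ^ (p + 1) := by
  obtain ⟨n, hzn, hzn'⟩ := hz
  have hbdd : ∀ p : ℤ, β ^ p ≤ z → p ≤ n := fun p hp => by
    by_contra! hnp
    have : β ^ (n : ℤ) < β ^ p :=
      calc β ^ (n : ℤ) < β ^ (n : ℤ) * β ^ (p - n) :=
            lt_mul_of_one_lt_right' _ (one_lt_zpow hβ (by omega))
        _ = β ^ p := by rw [← zpow_add, add_sub_cancel]
    exact (hp.trans (zpow_natCast β n ▸ hzn)).not_gt this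
  obtain ⟨p, hp, hmax⟩ := Int.exists_greatest_of_bdd ⟨n, hbdd⟩
    ⟨-n, by rw [zpow_neg, zpow_natCast]; exact inv_le'.1 hzn'⟩
  exact ⟨p, hp, lt_of_not_ge fun h => by linarith [hmax _ h]⟩

namespace IsConvex

variable {C D : Subgroup G}

theorem lt_mabs_of_notMem (hC : C.IsConvex) {x c : G} (hxC : x ∉ C) (hc : c ∈ C) : c < |x|ₘ :=
  hC.lt_of_notMem (one_le_mabs x) (mabs_mem_iff.not.2 hxC) hc

theorem le_total (hC : C.IsConvex) (hD : D.IsConvex) : C ≤ D ∨ D ≤ C := by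
  by_contra! h
  obtain ⟨x, hxC, hxD⟩ := SetLike.not_le_iff_exists.1 h.1
  obtain ⟨y, hyD, hyC⟩ := SetLike.not_le_iff_exists.1 h.2
  rcases _root_.le_total |x|ₘ |y|ₘ with hxy | hyx
  · exact hxD (mabs_mem_iff.1 (hD.mem_of_le (mabs_mem_iff.2 hyD) (one_le_mabs x) hxy))
  · exact hyC (mabs_mem_iff.1 (hC.mem_of_le (mabs_mem_iff.2 hxC) (one_le_mabs y) hyx))

theorem smul (hC : C.IsConvex) (k : ConjAct G) : (k • C).IsConvex := by
  intro x hx z hz y hxy hyz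
  rw [mem_pointwise_smul_iff_inv_smul_mem, ConjAct.smul_def] at hx hz ⊢
  exact hC _ hx _ hz _ (by gcongr) (by gcongr)

theorem forall_mul_lt_or_forall_mul_lt (hC : C.IsConvex) {x y : G} (h : y * x⁻¹ ∉ C) :
    (∀ n ∈ C, n * x < y) ∨ (∀ n ∈ C, n * y < x) := by
  rcases lt_or_gt_of_ne (fun h1 : y * x⁻¹ = 1 => h (h1 ▸ C.one_mem)) with hlt | hlt
  · have h' : x * y⁻¹ ∉ C := fun hm => h (by simpa using C.inv_mem hm)
    have hpos : 1 < x * y⁻¹ := by simpa using one_lt_inv'.2 hlt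
    exact Or.inr fun n hn => lt_mul_inv_iff_mul_lt.1 (hC.lt_of_notMem hpos.le h' hn)
  · exact Or.inl fun n hn => lt_mul_inv_iff_mul_lt.1 (hC.lt_of_notMem hlt.le h hn)

end IsConvex

theorem boundedByPowers_isConvex {β : G} (hβ : 1 ≤ β) : (boundedByPowers β).IsConvex := by
  rintro x ⟨n, -, hx⟩ z ⟨m, hz, -⟩ y hxy hyz
  refine ⟨max n m, hyz.trans (hz.trans (pow_le_pow_right' hβ (le_max_right n m))), ?_⟩
  exact (inv_le_inv_iff.2 hxy).trans (hx.trans (pow_le_pow_right' hβ (le_max_left n m)))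

namespace IsConvexJump

variable {N H K : Subgroup G}

theorem le_of_lt (hj : N.IsConvexJump H) (hK : K.IsConvex) (hKH : K < H) : K ≤ N := by
  obtain ⟨hN, -, -, hmax⟩ := hj
  rcases hK.le_total hN with hKN | hNK
  · exact hKN
  · exact (hNK.eq_or_lt.resolve_right fun hNK => hmax K hK ⟨hNK, hKH⟩).ge

theorem le_of_mem_of_notMem (hj : N.IsConvexJump H) (hK : K.IsConvex) {x : G} (hx : x ∈ K)
    (hxN : x ∉ N) : H ≤ K := by
  rcases hj.2.1.le_total hK with hHK | hKH
  · exact hHK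
  · rcases hKH.eq_or_lt with rfl | hlt
    · exact le_rfl
    · exact absurd (hj.le_of_lt hK hlt hx) hxN

theorem exists_one_lt_mem_notMem (hj : N.IsConvexJump H) : ∃ h ∈ H, h ∉ N ∧ 1 < h :=
  exists_one_lt_mem_notMem_of_lt hj.2.2.1

theorem not_lt_smul (hj : N.IsConvexJump H) {k : ConjAct G} (hk : k • H = H) :
    ¬N < k • N := by
  obtain ⟨hN, -, hNH, hmax⟩ := hj
  exact fun hlt => hmax _ (hN.smul k) ⟨hlt, hk ▸ pointwise_smul_lt_pointwise_smul_iff.2 hNH⟩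

theorem smul_eq_of_smul_eq (hj : N.IsConvexJump H) {k : ConjAct G} (hk : k • H = H) :
    k • N = N := by
  rcases (hj.1.smul k).le_total hj.1 with hle | hle
  · refine hle.eq_or_lt.resolve_right fun hlt => hj.not_lt_smul (inv_smul_eq_iff.2 hk.symm) ?_
    simpa using (pointwise_smul_lt_pointwise_smul_iff (a := k⁻¹)).2 hlt
  · exact (hle.eq_or_lt.resolve_right (hj.not_lt_smul hk)).symm

theorem mem_normalizer_of_mem_normalizer (hj : N.IsConvexJump H) {g : G}
    (hg : g ∈ normalizer (H : Set G)) : g ∈ normalizer (N : Set G) :=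
  conjAct_pointwise_smul_iff.1 (hj.smul_eq_of_smul_eq (conjAct_pointwise_smul_iff.2 hg))

theorem le_normalizer (hj : N.IsConvexJump H) : H ≤ normalizer (N : Set G) :=
  fun _ hh => hj.mem_normalizer_of_mem_normalizer (Subgroup.le_normalizer hh)

theorem exists_conj_mem_of_notMem_normalizer (hj : N.IsConvexJump H) {g : G}
    (hg : g ∉ normalizer (H : Set G)) : ∃ g' : G, ∀ x ∈ H, g' * x * g'⁻¹ ∈ N := by
  have hconj : ∀ g' : G, ConjAct.toConjAct g' • H < H → ∀ x ∈ H, g' * x * g'⁻¹ ∈ N :=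
    fun g' hlt x hx => by
      simpa [ConjAct.toConjAct_smul] using
        hj.le_of_lt (hj.2.1.smul _) hlt (smul_mem_pointwise_smul x _ H hx)
  have hne : ConjAct.toConjAct g • H ≠ H := mt conjAct_pointwise_smul_iff.1 hg
  rcases (hj.2.1.smul (ConjAct.toConjAct g)).le_total hj.2.1 with hle | hle
  · exact ⟨g, hconj g (hle.lt_of_ne hne)⟩
  · refine ⟨g⁻¹, hconj g⁻¹ ?_⟩
    simpa [ConjAct.toConjAct_inv] using
      (pointwise_smul_lt_pointwise_smul_iff (a := (ConjAct.toConjAct g)⁻¹)).2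
        (hle.lt_of_ne hne.symm)

theorem le_boundedByPowers (hj : N.IsConvexJump H) {β : G} (hβ : 1 ≤ β) (hβN : β ∉ N) :
    H ≤ boundedByPowers β := by
  refine hj.le_of_mem_of_notMem (boundedByPowers_isConvex hβ) ⟨1, by simp, ?_⟩ hβN
  simpa using (inv_le_one'.2 hβ).trans hβ

theorem commutatorElement_lt_sq (hj : N.IsConvexJump H) {β x y : G} (hβ : 1 < β) (hβN : β ∉ N)
    (hx : x ∈ H) (hy : y ∈ H) : ⁅x, y⁆ < β ^ 2 := by
  obtain ⟨p, hpx, hxp⟩ :=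
    exists_zpow_le_lt_of_mem_boundedByPowers hβ (hj.le_boundedByPowers hβ.le hβN hx)
  obtain ⟨q, hqy, hyq⟩ :=
    exists_zpow_le_lt_of_mem_boundedByPowers hβ (hj.le_boundedByPowers hβ.le hβN hy)
  calc ⁅x, y⁆ = x * y * (y * x)⁻¹ := by group
    _ < β ^ (p + 1) * β ^ (q + 1) * (y * x)⁻¹ := by gcongr
    _ ≤ β ^ (p + 1) * β ^ (q + 1) * (β ^ q * β ^ p)⁻¹ := by
      gcongr; exact inv_le_inv_iff.2 (mul_le_mul' hqy hpx)
    _ = β ^ 2 := by group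

theorem exists_zpow_inv_mul_mem (hj : N.IsConvexJump H) {β z : G} (hβH : β ∈ H) (hβ : 1 < β)
    (hβN : β ∉ N) (hmin : ∀ w ∈ H, w ∉ N → 1 < w → w < β → w⁻¹ * β ∈ N) (hz : z ∈ H) :
    ∃ p : ℤ, (β ^ p)⁻¹ * z ∈ N := by
  obtain ⟨p, hpz, hzp⟩ :=
    exists_zpow_le_lt_of_mem_boundedByPowers hβ (hj.le_boundedByPowers hβ.le hβN hz)
  by_cases hwN : (β ^ p)⁻¹ * z ∈ N
  · exact ⟨p, hwN⟩
  have hw1 : 1 < (β ^ p)⁻¹ * z :=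
    (le_inv_mul_iff_mul_le.2 (by simpa using hpz)).lt_of_ne fun h => hwN (h ▸ N.one_mem)
  have hwβ : (β ^ p)⁻¹ * z < β := inv_mul_lt_iff_lt_mul.2 (by rwa [← zpow_add_one])
  refine ⟨p + 1, ?_⟩
  have := N.inv_mem (hmin _ (mul_mem (inv_mem (zpow_mem hβH p)) hz) hwN hw1 hwβ)
  convert this using 1
  rw [zpow_add_one]; group

theorem commutatorElement_mem (hj : N.IsConvexJump H) {x y : G} (hx : x ∈ H) (hy : y ∈ H) :
    ⁅x, y⁆ ∈ N := by
  by_contra hc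
  wlog hpos : 1 < ⁅x, y⁆ generalizing x y
  · have hlt : ⁅x, y⁆ < 1 := (not_lt.1 hpos).lt_of_ne fun h => hc (h ▸ N.one_mem)
    refine this hy hx ?_ ?_ <;> rw [← commutatorElement_inv]
    · exact fun h => hc (by simpa using N.inv_mem h)
    · exact one_lt_inv'.2 hlt
  have hcH : ⁅x, y⁆ ∈ H := by
    rw [commutatorElement_def]
    exact mul_mem (mul_mem (mul_mem hx hy) (inv_mem hx)) (inv_mem hy)
  by_cases hmin : ∀ w ∈ H, w ∉ N → 1 < w → w < ⁅x, y⁆ → w⁻¹ * ⁅x, y⁆ ∈ N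
  · -- `H / N` is cyclic, generated by the commutator
    obtain ⟨p, hp⟩ := hj.exists_zpow_inv_mul_mem hcH hpos hc hmin hx
    obtain ⟨q, hq⟩ := hj.exists_zpow_inv_mul_mem hcH hpos hc hmin hy
    exact hc (commutatorElement_mem_of_zpow_inv_mul_mem (hj.le_normalizer hcH) hp hq)
  · push Not at hmin
    obtain ⟨w, hw, hwN, hw1, hwc, hwcN⟩ := hmin
    rcases sq_le_or_inv_mul_sq_le w ⁅x, y⁆ with hsq | hsq
    · exact (hj.commutatorElement_lt_sq hw1 hwN hx hy).not_ge hsq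
    · exact (hj.commutatorElement_lt_sq (lt_inv_mul_iff_lt.2 hwc) hwcN hx hy).not_ge hsq

theorem mul_pow_mul_inv_mem (hj : N.IsConvexJump H) {x y : G} (hx : x ∈ H) (hy : y ∈ H)
    (r : ℕ) : (x * y) ^ r * (x ^ r * y ^ r)⁻¹ ∈ N := by
  induction r with
  | zero => simp
  | succ r ih =>
    have e : (x * y) ^ (r + 1) * (x ^ (r + 1) * y ^ (r + 1))⁻¹ =
        (x * y) ^ r * (x ^ r * y ^ r)⁻¹ * (x ^ r * ⁅y ^ r, x⁆ * (x ^ r)⁻¹) := by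
      simp only [pow_succ, commutatorElement_def]; group
    rw [e]
    refine mul_mem ih ((mem_normalizer_iff.1 (hj.le_normalizer (pow_mem hx r)) _).1 ?_)
    exact hj.commutatorElement_mem (pow_mem hy r) hx

theorem exists_pow_le_mul_conj_pow (hj : N.IsConvexJump H) {δ h : G} {m : ℕ}
    (hδN : δ ∈ normalizer (N : Set G)) (hδH : δ ∈ normalizer (H : Set G)) (hh : h ∈ H)
    (hd : 1 ≤ δ * h * δ⁻¹ * h⁻¹) (hm : h ≤ (δ * h * δ⁻¹ * h⁻¹) ^ m) (k : ℕ) :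
    ∃ n ∈ N, h ^ (m + k) ≤ n * (δ ^ k * h * (δ ^ k)⁻¹) ^ m := by
  -- additively in `H / N`: `δ` sends `h` to `h + d` with `h ≤ m d`, so `(m + k) h ≤ m δᵏ(h)`
  induction k with
  | zero => exact ⟨1, N.one_mem, by simp⟩
  | succ k ih =>
    obtain ⟨n, hn, hle⟩ := ih
    set d := δ * h * δ⁻¹ * h⁻¹
    have hdh : d * h = δ * h * δ⁻¹ := by simp only [d]; group
    have hc := hj.mul_pow_mul_inv_mem (mul_mem ((mem_normalizer_iff.1 hδH h).1 hh) (inv_mem hh))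
      hh (m + k)
    rw [hdh, conj_pow] at hc
    set c := δ * h ^ (m + k) * δ⁻¹ * (d ^ (m + k) * h ^ (m + k))⁻¹
    refine ⟨c⁻¹ * (δ * n * δ⁻¹), mul_mem (inv_mem hc) ((mem_normalizer_iff.1 hδN n).1 hn), ?_⟩
    calc h ^ (m + (k + 1)) = h * h ^ (m + k) := by rw [← add_assoc, pow_succ']
      _ ≤ d ^ (m + k) * h ^ (m + k) :=
          mul_le_mul_left (hm.trans (pow_le_pow_right' hd (Nat.le_add_right m k))) _
      _ = c⁻¹ * (δ * h ^ (m + k) * δ⁻¹) := by simp only [c]; group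
      _ ≤ c⁻¹ * (δ * (n * (δ ^ k * h * (δ ^ k)⁻¹) ^ m) * δ⁻¹) := by gcongr
      _ = c⁻¹ * (δ * n * δ⁻¹) * (δ ^ (k + 1) * h * (δ ^ (k + 1))⁻¹) ^ m := by
          rw [conj_pow, conj_pow, pow_succ']; group

theorem exists_sq_mul_lt_conj_pow (hj : N.IsConvexJump H) {δ h : G}
    (hδN : δ ∈ normalizer (N : Set G)) (hδH : δ ∈ normalizer (H : Set G)) (hh : h ∈ H)
    (hhN : h ∉ N) (h1 : 1 < h) (hexp : ∀ n ∈ N, n * h < δ * h * δ⁻¹) :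
    ∃ K : ℕ, ∀ n ∈ N, n * h ^ 2 < δ ^ K * h * (δ ^ K)⁻¹ := by
  have hd1 : 1 < δ * h * δ⁻¹ * h⁻¹ := lt_mul_inv_iff_mul_lt.2 (by simpa using hexp 1 N.one_mem)
  have hdN : δ * h * δ⁻¹ * h⁻¹ ∉ N := fun hdN => (hexp _ hdN).ne (by group)
  obtain ⟨m, hm, -⟩ := hj.le_boundedByPowers hd1.le hdN hh
  refine ⟨m + 1, fun n hn => lt_of_not_ge fun hle => ?_⟩
  obtain ⟨n', hn', hgrow⟩ := hj.exists_pow_le_mul_conj_pow hδN hδH hh hd1.le hm (m + 1)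
  have hc := hj.mul_pow_mul_inv_mem (hj.2.2.1.le hn) (pow_mem hh 2) m
  set c := (n * h ^ 2) ^ m * (n ^ m * (h ^ 2) ^ m)⁻¹
  have hle' : h * h ^ (2 * m) ≤ n' * c * n ^ m * h ^ (2 * m) :=
    calc h * h ^ (2 * m) = h ^ (m + (m + 1)) := by rw [← pow_succ']; ring_nf
      _ ≤ n' * (δ ^ (m + 1) * h * (δ ^ (m + 1))⁻¹) ^ m := hgrow
      _ ≤ n' * (n * h ^ 2) ^ m := by gcongr
      _ = n' * c * n ^ m * h ^ (2 * m) := by simp only [c, pow_mul]; group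
  exact hhN (hj.1.mem_of_le (mul_mem (mul_mem hn' hc) (pow_mem hn m)) h1.le
    (le_of_mul_le_mul_right' hle'))

theorem exists_forall_mul_lt_conj (hj : N.IsConvexJump H) {γ h₀ : G}
    (hγN : γ ∈ normalizer (N : Set G)) (hh₀ : h₀ ∈ H) (hc : ⁅h₀, γ⁆ ∉ N) :
    ∃ h ∈ H, h ∉ N ∧ 1 < h ∧ ∃ δ ∈ ({γ, γ⁻¹} : Set G), ∀ n ∈ N, n * h < δ * h * δ⁻¹ := by
  have hh₀N : h₀ ∉ N := fun hN => hc (by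
    rw [show ⁅h₀, γ⁆ = h₀ * (γ * h₀⁻¹ * γ⁻¹) by rw [commutatorElement_def]; group]
    exact mul_mem hN ((mem_normalizer_iff.1 hγN _).1 (inv_mem hN)))
  wlog h1 : 1 < h₀ generalizing h₀
  · have hlt : h₀ < 1 := (not_lt.1 h1).lt_of_ne fun h => hh₀N (h ▸ N.one_mem)
    refine this (inv_mem hh₀) (fun hN => hc ?_) (inv_mem_iff.not.2 hh₀N) (one_lt_inv'.2 hlt)
    rw [show ⁅h₀, γ⁆ = h₀ * ⁅h₀⁻¹, γ⁆⁻¹ * h₀⁻¹ by simp only [commutatorElement_def]; group]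
    exact (mem_normalizer_iff.1 (hj.le_normalizer hh₀) _).1 (inv_mem hN)
  have hcomm : h₀ * (γ * h₀ * γ⁻¹)⁻¹ = ⁅h₀, γ⁆ := by rw [commutatorElement_def]; group
  rcases hj.1.forall_mul_lt_or_forall_mul_lt (hcomm ▸ hc) with hlt | hgt
  · refine ⟨h₀, hh₀, hh₀N, h1, γ⁻¹, Or.inr rfl, fun n hn => ?_⟩
    have := hlt _ ((mem_normalizer_iff.1 hγN n).1 hn)
    calc n * h₀ = γ⁻¹ * (γ * n * γ⁻¹ * (γ * h₀ * γ⁻¹)) * γ := by group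
      _ < γ⁻¹ * h₀ * γ := by gcongr
      _ = γ⁻¹ * h₀ * γ⁻¹⁻¹ := by rw [inv_inv]
  · exact ⟨h₀, hh₀, hh₀N, h1, γ, Or.inl rfl, hgt⟩

theorem exists_generatesFreeMonoid2_of_mem_normalizer (hj : N.IsConvexJump H) {γ h₀ : G}
    (hγH : γ ∈ normalizer (H : Set G)) (hh₀ : h₀ ∈ H) (hc : ⁅h₀, γ⁆ ∉ N) :
    ∃ a b : G, 1 < a ∧ 1 < b ∧ GeneratesFreeMonoid2 a b := by
  have hγN := hj.mem_normalizer_of_mem_normalizer hγH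
  obtain ⟨h, hh, hhN, h1, δ, hδ, hexp⟩ := hj.exists_forall_mul_lt_conj hγN hh₀ hc
  have hδN : δ ∈ normalizer (N : Set G) := by rcases hδ with rfl | rfl <;> simpa
  have hδH : δ ∈ normalizer (H : Set G) := by rcases hδ with rfl | rfl <;> simpa
  obtain ⟨K, hK⟩ := hj.exists_sq_mul_lt_conj_pow hδN hδH hh hhN h1 hexp
  set b := δ ^ K
  have hbH : b⁻¹ ∉ H := fun hbH => by
    have := hK _ (hj.commutatorElement_mem (inv_mem_iff.1 hbH) hh)
    rw [commutatorElement_def, pow_two, ← mul_assoc, inv_mul_cancel_right] at this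
    exact h1.not_gt (mul_lt_iff_lt_one_left'.1 this)
  refine exists_generatesFreeMonoid2_of_conj_sq_le h1 (hj.2.1.lt_mabs_of_notMem hbH hh) ?_
  calc b⁻¹ * h ^ 2 * b⁻¹⁻¹ ≤ b⁻¹ * (b * h * b⁻¹) * b⁻¹⁻¹ := by
        gcongr; simpa using (hK 1 N.one_mem).le
    _ = h := by group

theorem exists_generatesFreeMonoid2_of_conj_mem (hj : N.IsConvexJump H) {g : G}
    (hg : ∀ x ∈ H, g * x * g⁻¹ ∈ N) : ∃ a b : G, 1 < a ∧ 1 < b ∧ GeneratesFreeMonoid2 a b := by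
  obtain ⟨h, hh, hhN, h1⟩ := hj.exists_one_lt_mem_notMem
  have hgH : g ∉ H := fun hgH => hhN ((mem_normalizer_iff.1 (hj.le_normalizer hgH) h).2 (hg h hh))
  exact exists_generatesFreeMonoid2_of_conj_sq_le h1 (hj.2.1.lt_mabs_of_notMem hgH hh)
    (hj.1.lt_of_notMem h1.le hhN (hg _ (pow_mem hh 2))).le

end IsConvexJump

end Subgroup

end OrderedGroup

/-- Let `(G,<)` be an ordered group possessing a convex jump `(N, H)`
which is not central, i.e. `[H,G] ⊄ N`. Then `G` contains a noncommutative free monoid: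
there exist `a, b ∈ G` with `1 < a` and `1 < b` generating a free monoid of rank 2. -/
theorem free_monoid_of_noncentral_convex_jump (G : Type*) [Group G] [LinearOrder G]
    [CovariantClass G G (· * ·) (· < ·)]
    [CovariantClass G G (Function.swap (· * ·)) (· < ·)]
    (N H : Subgroup G) (hjump : N.IsConvexJump H)
    (hnc : ¬ ⁅H, (⊤ : Subgroup G)⁆ ≤ N) :
    ∃ a b : G, 1 < a ∧ 1 < b ∧ GeneratesFreeMonoid2 a b := by
  obtain ⟨h₀, hh₀, g, -, hg⟩ : ∃ h₀ ∈ H, ∃ g ∈ (⊤ : Subgroup G), ⁅h₀, g⁆ ∉ N := by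
    simpa [Subgroup.commutator_le] using hnc
  by_cases hgH : g ∈ Subgroup.normalizer (H : Set G)
  · exact hjump.exists_generatesFreeMonoid2_of_mem_normalizer hgH hh₀ hg
  · obtain ⟨g', hg'⟩ := hjump.exists_conj_mem_of_notMem_normalizer hgH
    exact hjump.exists_generatesFreeMonoid2_of_conj_mem hg'
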